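/- The Ricci tensor of the Mrugala metric G has components R_{00} = −n/2, R_{0 p_i} = 0, R_{0 x^i} = −(n/2) p_i, R_{p_i p_j} = 0, R_{p_i x^j} = ½ δ_{ij}, R_{x^i x^j} = −(n/2) p_i p_j (in the block ordering (x^0; p; x)), and the scalar curvature of G is the constant 𝓡(G) = n/2. -/

import Mathlib

/-!
Write `η = dx⁰ + Σᵢ pᵢ dxⁱ` for the contact form; then `G = η ⊗ η + Σᵢ (dpᵢ ⊗ dxⁱ + dxⁱ ⊗ dpᵢ)`.
Since `Γ^μ_{μα} = ∂_α log √|det G|` and `det G = (-1)ⁿ` is constant, these contracted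
Christoffel symbols vanish, and the Ricci tensor reduces to `∂_μ Γ^μ_{βα} - Γ^μ_{βγ} Γ^γ_{μα}`.
The first term is half the constant pairing part `G - η ⊗ η`, the second is `(n/2) η ⊗ η`, so
`Ric = G/2 - ((n+1)/2) η ⊗ η`. Finally `G ∂₀ = η`, so `G⁻¹ η = ∂₀` and `η(∂₀) = 1`, whence
`𝓡 = tr(G⁻¹ G)/2 - (n+1)/2 = (2n+1)/2 - (n+1)/2 = n/2`.
-/

abbrev Idx (n : ℕ) : Type := Unit ⊕ (Fin n ⊕ Fin n)
abbrev Pt (n : ℕ) : Type := Idx n → ℝ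

/-- The Mrugala metric `G = [[1, 0, pᵀ], [0, 0ₙ, Iₙ], [p, Iₙ, p pᵀ]]`. -/
def Gmat (n : ℕ) (m : Pt n) : Matrix (Idx n) (Idx n) ℝ :=
  Matrix.of fun a b =>
    match a, b with
    | Sum.inl _, Sum.inl _ => 1
    | Sum.inl _, Sum.inr (Sum.inl _) => 0
    | Sum.inl _, Sum.inr (Sum.inr j) => m (Sum.inr (Sum.inl j))
    | Sum.inr (Sum.inl _), Sum.inl _ => 0
    | Sum.inr (Sum.inl _), Sum.inr (Sum.inl _) => 0
    | Sum.inr (Sum.inl i), Sum.inr (Sum.inr j) => if i = j then 1 else 0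
    | Sum.inr (Sum.inr i), Sum.inl _ => m (Sum.inr (Sum.inl i))
    | Sum.inr (Sum.inr i), Sum.inr (Sum.inl j) => if i = j then 1 else 0
    | Sum.inr (Sum.inr i), Sum.inr (Sum.inr j) =>
        m (Sum.inr (Sum.inl i)) * m (Sum.inr (Sum.inl j))

/-- Partial derivative `∂_a f (m)` of a scalar function on `P`. -/
noncomputable def pd {n : ℕ} (f : Pt n → ℝ) (m : Pt n) (a : Idx n) : ℝ :=
  fderiv ℝ f m (Pi.single a 1)

/-- Christoffel symbols `Γ^α_{βγ} = ½ Σ_s G^{αs}(∂_β G_{γs} + ∂_γ G_{βs} - ∂_s G_{βγ})`. -/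
noncomputable def Christoffel (n : ℕ) (m : Pt n) (α β γ : Idx n) : ℝ :=
  (1 / 2) * ∑ s, (Gmat n m)⁻¹ α s *
    (pd (fun m' => Gmat n m' γ s) m β + pd (fun m' => Gmat n m' β s) m γ
      - pd (fun m' => Gmat n m' β γ) m s)

/-- The Ricci tensor
`R_{αβ} = ∂_μ Γ^μ_{βα} - ∂_β Γ^μ_{μα} + Γ^μ_{μγ}Γ^γ_{βα} - Γ^μ_{βγ}Γ^γ_{μα}`. -/
noncomputable def RicciT (n : ℕ) (m : Pt n) (α β : Idx n) : ℝ :=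
  (∑ μ, pd (fun m' => Christoffel n m' μ β α) m μ)
    - (∑ μ, pd (fun m' => Christoffel n m' μ μ α) m β)
    + (∑ μ, ∑ γ, Christoffel n m μ μ γ * Christoffel n m γ β α)
    - (∑ μ, ∑ γ, Christoffel n m μ β γ * Christoffel n m γ μ α)

/-- The scalar curvature `𝓡 = Σ G^{αβ} R_{βα}`. -/
noncomputable def scalarCurv (n : ℕ) (m : Pt n) : ℝ :=
  ∑ α, ∑ β, (Gmat n m)⁻¹ α β * RicciT n m β α

open Sum
open scoped Matrix

section PartialDerivative

variable {n : ℕ} {f g : Pt n → ℝ} {m : Pt n}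

lemma pd_const (c : ℝ) (a : Idx n) : pd (fun _ => c) m a = 0 := by
  simp [pd]

lemma pd_apply (d a : Idx n) : pd (fun m' => m' d) m a = if d = a then 1 else 0 := by
  rw [pd, (hasFDerivAt_apply d m).fderiv]
  simp [Pi.single_apply]

lemma pd_add (hf : DifferentiableAt ℝ f m) (hg : DifferentiableAt ℝ g m) (a : Idx n) :
    pd (fun m' => f m' + g m') m a = pd f m a + pd g m a := by
  rw [pd, fderiv_fun_add hf hg]
  rfl

lemma pd_mul (hf : DifferentiableAt ℝ f m) (hg : DifferentiableAt ℝ g m) (a : Idx n) :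
    pd (fun m' => f m' * g m') m a = f m * pd g m a + g m * pd f m a := by
  rw [pd, fderiv_fun_mul hf hg]
  rfl

lemma pd_sum {ι : Type*} (s : Finset ι) {F : ι → Pt n → ℝ}
    (hF : ∀ i ∈ s, DifferentiableAt ℝ (F i) m) (a : Idx n) :
    pd (fun m' => ∑ i ∈ s, F i m') m a = ∑ i ∈ s, pd (F i) m a := by
  rw [pd, fderiv_fun_sum hF]
  simp [pd]

end PartialDerivative

def contactForm (n : ℕ) (m : Pt n) : Idx n → ℝ
  | inl _ => 1
  | inr (inl _) => 0
  | inr (inr i) => m (inr (inl i))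

def GmatInv (n : ℕ) (m : Pt n) : Matrix (Idx n) (Idx n) ℝ :=
  Matrix.of fun a b =>
    match a, b with
    | inl _, inl _ => 1
    | inl _, inr (inl j) => -m (inr (inl j))
    | inr (inl i), inl _ => -m (inr (inl i))
    | inr (inl i), inr (inr j) => if i = j then 1 else 0
    | inr (inr i), inr (inl j) => if i = j then 1 else 0
    | _, _ => 0

lemma Gmat_mul_GmatInv (n : ℕ) (m : Pt n) : Gmat n m * GmatInv n m = 1 := by
  ext a b
  rcases a with _ | a | a <;> rcases b with _ | b | b <;>
    simp [Matrix.mul_apply, Gmat, GmatInv, Fintype.sum_sum_type, Matrix.one_apply, mul_comm]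

lemma inv_Gmat (n : ℕ) (m : Pt n) : (Gmat n m)⁻¹ = GmatInv n m :=
  Matrix.inv_eq_right_inv (Gmat_mul_GmatInv n m)

noncomputable def christoffelExplicit (n : ℕ) (m : Pt n) : Idx n → Idx n → Idx n → ℝ
  | inl _, inl _, inr (inr i) => 1 / 2 * m (inr (inl i))
  | inl _, inr (inr i), inl _ => 1 / 2 * m (inr (inl i))
  | inl _, inr (inl k), inr (inr i) => if k = i then 1 / 2 else 0
  | inl _, inr (inr i), inr (inl k) => if k = i then 1 / 2 else 0
  | inl _, inr (inr i), inr (inr j) => m (inr (inl i)) * m (inr (inl j))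
  | inr (inl k), inr (inl j), inl _ => if j = k then 1 / 2 else 0
  | inr (inl k), inl _, inr (inl j) => if j = k then 1 / 2 else 0
  | inr (inl k), inr (inl j), inr (inr i) => (if j = k then 1 / 2 else 0) * m (inr (inl i))
  | inr (inl k), inr (inr i), inr (inl j) => (if j = k then 1 / 2 else 0) * m (inr (inl i))
  | inr (inr k), inl _, inr (inr i) => if k = i then -1 / 2 else 0
  | inr (inr k), inr (inr i), inl _ => if k = i then -1 / 2 else 0
  | inr (inr k), inr (inr i), inr (inr j) =>
      (if k = i then -1 / 2 else 0) * m (inr (inl j))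
        + (if k = j then -1 / 2 else 0) * m (inr (inl i))
  | _, _, _ => 0

lemma Christoffel_eq_christoffelExplicit (n : ℕ) (m : Pt n) (α β γ : Idx n) :
    Christoffel n m α β γ = christoffelExplicit n m α β γ := by
  rw [Christoffel, inv_Gmat]
  rcases α with _ | a | a <;> rcases β with _ | b | b <;> rcases γ with _ | c | c <;>
    simp (disch := fun_prop) [Gmat, GmatInv, christoffelExplicit, Fintype.sum_sum_type, pd_mul,
      pd_apply, pd_const, mul_ite, ite_mul, mul_add, Finset.sum_add_distrib] <;>
    grind

lemma differentiable_Christoffel (n : ℕ) (α β γ : Idx n) :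
    Differentiable ℝ fun m => Christoffel n m α β γ := by
  simp only [Christoffel_eq_christoffelExplicit]
  rcases α with _ | a | a <;> rcases β with _ | b | b <;> rcases γ with _ | c | c <;>
    simp only [christoffelExplicit] <;> fun_prop

lemma sum_Christoffel_self (n : ℕ) (m : Pt n) (α : Idx n) :
    ∑ μ, Christoffel n m μ μ α = 0 := by
  simp only [Christoffel_eq_christoffelExplicit]
  rcases α with _ | a | a <;>
    simp [christoffelExplicit, Fintype.sum_sum_type, Finset.sum_add_distrib] <;> ring

lemma RicciT_eq_div_sub (n : ℕ) (m : Pt n) (α β : Idx n) :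
    RicciT n m α β = (∑ μ, pd (fun m' => Christoffel n m' μ β α) m μ)
      - ∑ μ, ∑ γ, Christoffel n m μ β γ * Christoffel n m γ μ α := by
  have hpd : ∑ μ, pd (fun m' => Christoffel n m' μ μ α) m β = 0 := by
    rw [← pd_sum _ fun μ _ => (differentiable_Christoffel n μ μ α).differentiableAt]
    simp only [sum_Christoffel_self, pd_const]
  have hquad : ∑ μ, ∑ γ, Christoffel n m μ μ γ * Christoffel n m γ β α = 0 := by
    rw [Finset.sum_comm]
    simp only [← Finset.sum_mul, sum_Christoffel_self, zero_mul, Finset.sum_const_zero]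
  rw [RicciT, hpd, hquad, sub_zero, add_zero]

lemma sum_pd_Christoffel (n : ℕ) (m : Pt n) (α β : Idx n) :
    ∑ μ, pd (fun m' => Christoffel n m' μ β α) m μ
      = (Gmat n m α β - contactForm n m α * contactForm n m β) / 2 := by
  simp only [Christoffel_eq_christoffelExplicit]
  rcases α with _ | a | a <;> rcases β with _ | b | b <;>
    simp only [christoffelExplicit, Fintype.sum_sum_type] <;>
    simp (disch := fun_prop) only [pd_mul, pd_add, pd_apply, pd_const] <;>
    simp [Gmat, contactForm] <;>
    grind

set_option maxHeartbeats 400000 in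
lemma sum_Christoffel_mul_Christoffel (n : ℕ) (m : Pt n) (α β : Idx n) :
    ∑ μ, ∑ γ, Christoffel n m μ β γ * Christoffel n m γ μ α
      = n / 2 * (contactForm n m α * contactForm n m β) := by
  simp only [Christoffel_eq_christoffelExplicit]
  rcases α with _ | a | a <;> rcases β with _ | b | b <;>
    simp [christoffelExplicit, contactForm, Fintype.sum_sum_type, mul_ite, ite_mul, mul_add,
      add_mul, Finset.sum_add_distrib] <;>
    grind

lemma RicciT_eq (n : ℕ) (m : Pt n) (α β : Idx n) :
    RicciT n m α β
      = Gmat n m α β / 2 - (n + 1) / 2 * (contactForm n m α * contactForm n m β) := by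
  rw [RicciT_eq_div_sub, sum_pd_Christoffel, sum_Christoffel_mul_Christoffel]
  ring

lemma inv_Gmat_mul_Gmat (n : ℕ) (m : Pt n) : (Gmat n m)⁻¹ * Gmat n m = 1 := by
  rw [inv_Gmat]
  exact mul_eq_one_comm.mp (Gmat_mul_GmatInv n m)

lemma Gmat_mulVec_single (n : ℕ) (m : Pt n) :
    Gmat n m *ᵥ Pi.single (inl ()) 1 = contactForm n m := by
  ext a
  rcases a with _ | a | a <;> simp [Gmat, contactForm]

lemma inv_Gmat_mulVec_contactForm (n : ℕ) (m : Pt n) :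
    (Gmat n m)⁻¹ *ᵥ contactForm n m = Pi.single (inl ()) 1 := by
  rw [← Gmat_mulVec_single, Matrix.mulVec_mulVec, inv_Gmat_mul_Gmat, Matrix.one_mulVec]

lemma scalarCurv_eq_trace_sub (n : ℕ) (m : Pt n) :
    scalarCurv n m = ((Gmat n m)⁻¹ * Gmat n m).trace / 2
      - (n + 1) / 2 * (contactForm n m ⬝ᵥ (Gmat n m)⁻¹ *ᵥ contactForm n m) := by
  simp only [scalarCurv, RicciT_eq, Matrix.trace, Matrix.diag, Matrix.mul_apply, dotProduct,
    Matrix.mulVec, mul_sub, Finset.sum_sub_distrib, Finset.sum_div, Finset.mul_sum]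
  congr 1 <;> exact Finset.sum_congr rfl fun _ _ => Finset.sum_congr rfl fun _ _ => by ring

lemma scalarCurv_eq (n : ℕ) (m : Pt n) : scalarCurv n m = n / 2 := by
  rw [scalarCurv_eq_trace_sub, inv_Gmat_mul_Gmat, inv_Gmat_mulVec_contactForm, Matrix.trace_one,
    dotProduct_single]
  simp [contactForm]
  ring

theorem mrugala_ricci_scalar_general (n : ℕ) (m : Pt n) (i j : Fin n) :
    RicciT n m (Sum.inl ()) (Sum.inl ()) = -(n / 2 : ℝ) ∧
    RicciT n m (Sum.inl ()) (Sum.inr (Sum.inl i)) = 0 ∧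
    RicciT n m (Sum.inl ()) (Sum.inr (Sum.inr i)) =
      -(n / 2 : ℝ) * m (Sum.inr (Sum.inl i)) ∧
    RicciT n m (Sum.inr (Sum.inl i)) (Sum.inr (Sum.inl j)) = 0 ∧
    RicciT n m (Sum.inr (Sum.inl i)) (Sum.inr (Sum.inr j)) =
      (1 / 2 : ℝ) * (if i = j then 1 else 0) ∧
    RicciT n m (Sum.inr (Sum.inr i)) (Sum.inr (Sum.inr j)) =
      -(n / 2 : ℝ) * (m (Sum.inr (Sum.inl i)) * m (Sum.inr (Sum.inl j))) ∧
    scalarCurv n m = (n / 2 : ℝ) := by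
  refine ⟨?_, ?_, ?_, ?_, ?_, ?_, scalarCurv_eq n m⟩ <;>
    simp only [RicciT_eq, Gmat, contactForm, Matrix.of_apply] <;>
    ring

theorem mrugala_ricci_scalar (n : ℕ) (hn : 1 ≤ n) (m : Pt n) (i j : Fin n) :
    RicciT n m (Sum.inl ()) (Sum.inl ()) = -(n / 2 : ℝ) ∧
    RicciT n m (Sum.inl ()) (Sum.inr (Sum.inl i)) = 0 ∧
    RicciT n m (Sum.inl ()) (Sum.inr (Sum.inr i)) =
      -(n / 2 : ℝ) * m (Sum.inr (Sum.inl i)) ∧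
    RicciT n m (Sum.inr (Sum.inl i)) (Sum.inr (Sum.inl j)) = 0 ∧
    RicciT n m (Sum.inr (Sum.inl i)) (Sum.inr (Sum.inr j)) =
      (1 / 2 : ℝ) * (if i = j then 1 else 0) ∧
    RicciT n m (Sum.inr (Sum.inr i)) (Sum.inr (Sum.inr j)) =
      -(n / 2 : ℝ) * (m (Sum.inr (Sum.inl i)) * m (Sum.inr (Sum.inl j))) ∧
    scalarCurv n m = (n / 2 : ℝ) :=
  mrugala_ricci_scalar_general n m i j
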